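/- In the game F-Wythoff, the set of positions with Sprague-Grundy value 2 is exactly {(0,2), (1,3)} ∪ {(⌊φn⌋+4, ⌊φ²n⌋+4) : n ≥ 0} (pairs unordered), where φ = (1+√5)/2. -/

import Mathlib

noncomputable def phi : ℝ := (1 + Real.sqrt 5) / 2

noncomputable def fl (n : ℕ) : ℕ := ⌊phi * n⌋₊

noncomputable def fl2 (n : ℕ) : ℕ := ⌊phi ^ 2 * n⌋₊

def FMove (p q : ℕ × ℕ) : Prop :=
  ∃ a b x y : ℕ, a ≤ b ∧ x ≤ y ∧ (p = (a, b) ∨ p = (b, a)) ∧ (q = (x, y) ∨ q = (y, x)) ∧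
    ((x = a ∧ y < b) ∨ (x < a ∧ y = b) ∨ (x < a ∧ y = a) ∨
      (∃ k, 1 ≤ k ∧ k < a ∧ (b - k) / (a - k) = b / a ∧ x = a - k ∧ y = b - k))

theorem fMove_lt {p q : ℕ × ℕ} (h : FMove p q) : q.1 + q.2 < p.1 + p.2 := by
  obtain ⟨a, b, x, y, hab, hxy, hp, hq, hc⟩ := h
  have hps : p.1 + p.2 = a + b := by rcases hp with h | h <;> subst h <;> simp <;> omega
  have hqs : q.1 + q.2 = x + y := by rcases hq with h | h <;> subst h <;> simp <;> omega
  rw [hps, hqs]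
  rcases hc with ⟨h1, h2⟩ | ⟨h1, h2⟩ | ⟨h1, h2⟩ | ⟨k, hk1, hk2, _, h1, h2⟩ <;> omega

def PPos (p : ℕ × ℕ) : Prop := ∀ q, FMove p q → ¬ PPos q
termination_by p.1 + p.2
decreasing_by exact fMove_lt (by assumption)

noncomputable def grundy (p : ℕ × ℕ) : ℕ :=
  sInf {g : ℕ | ∀ q, FMove p q → grundy q ≠ g}
termination_by p.1 + p.2
decreasing_by exact fMove_lt (by assumption)

/-!
If pairwise disjoint sets `S 0, …, S k` of positions are such that no move stays inside one
`S i` and from every position outside `S 0 ∪ … ∪ S i` some move enters `S i`, then `S i` is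
exactly the set of positions of Grundy value `i`: this is the mex rule, by induction on
`p.1 + p.2`.

For F-Wythoff, `S i` consists of a few small positions together with Wythoff's P-positions
`(⌊nφ⌋, ⌊nφ²⌋)` translated by `c = 1, 2, 4` for `i = 0, 1, 2`. A sorted pair `(a, b)` is such
a translate iff `a = ⌊(b - a)φ⌋ + c`, and since `⌊nφ⌋` and `⌊nφ²⌋ = ⌊nφ⌋ + n`, `n ≥ 1`,
partition the positive integers (Beatty), the classical Wythoff argument shows that no move
joins two translates while every position with `a > c` moves to one. The only diagonal moves
used go between pairs with `⌊b/a⌋ = 1`, so the extra F-Wythoff condition never gets in the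
way. The small positions are checked directly.
-/

open Real

lemma phi_eq_goldenRatio : phi = goldenRatio := rfl

lemma phi_holderConjugate_sq : phi.HolderConjugate (phi ^ 2) := by
  rw [phi_eq_goldenRatio, Real.holderConjugate_iff, ← inv_pow, inv_goldenRatio, neg_sq,
    goldenConj_sq]
  exact ⟨one_lt_goldenRatio, by ring⟩

lemma fl2_eq_fl_add (n : ℕ) : fl2 n = fl n + n := by
  rw [fl2, fl, phi_eq_goldenRatio, goldenRatio_sq, add_mul, one_mul,
    Nat.floor_add_natCast (by positivity [goldenRatio_pos])]

lemma le_fl (n : ℕ) : n ≤ fl n :=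
  Nat.le_floor (le_mul_of_one_le_left n.cast_nonneg one_lt_goldenRatio.le)

lemma fl_zero : fl 0 = 0 := by simp [fl]

lemma fl_one : fl 1 = 1 := by
  rw [fl, Nat.cast_one, mul_one, Nat.floor_eq_iff (by positivity [goldenRatio_pos]),
    phi_eq_goldenRatio]
  exact ⟨by exact_mod_cast one_lt_goldenRatio.le, by norm_num [goldenRatio_lt_two]⟩

lemma fl_strictMono : StrictMono fl := by
  refine strictMono_nat_of_lt_succ fun n =>
    Nat.lt_of_lt_of_le (Nat.lt_succ_self _) (Nat.le_floor ?_)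
  have := Nat.floor_le (a := phi * n) (by positivity [goldenRatio_pos])
  rw [fl]
  push_cast
  nlinarith [phi_eq_goldenRatio ▸ one_lt_goldenRatio]

lemma mem_beattySeq_pos_natCast_iff {r : ℝ} (hr : 0 ≤ r) {c : ℕ} :
    (c : ℤ) ∈ {beattySeq r k | k > 0} ↔ ∃ m : ℕ, 0 < m ∧ ⌊r * m⌋₊ = c := by
  have key (m : ℕ) : beattySeq r m = ⌊r * m⌋₊ := by
    rw [beattySeq, Int.cast_natCast, mul_comm, Int.natCast_floor_eq_floor (by positivity)]
  constructor
  · rintro ⟨k, hk, hkc⟩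
    lift k to ℕ using hk.le
    exact ⟨k, by exact_mod_cast hk, by rw [key] at hkc; exact_mod_cast hkc⟩
  · rintro ⟨m, hm, rfl⟩
    exact ⟨m, by exact_mod_cast hm, key m⟩

lemma xor_exists_fl_exists_fl2 {c : ℕ} (hc : 0 < c) :
    Xor (∃ m, 0 < m ∧ fl m = c) (∃ m, 0 < m ∧ fl2 m = c) := by
  have h := Set.ext_iff.mp
    (goldenRatio_irrational.beattySeq_symmDiff_beattySeq_pos phi_holderConjugate_sq) c
  rw [Set.mem_symmDiff, mem_beattySeq_pos_natCast_iff (by positivity [goldenRatio_pos]),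
    mem_beattySeq_pos_natCast_iff (by positivity)] at h
  exact h.mpr (by simpa using hc)

lemma exists_eq_fl_or_eq_fl2 {c : ℕ} (hc : 0 < c) : ∃ m, 0 < m ∧ (fl m = c ∨ fl2 m = c) := by
  rcases (xor_exists_fl_exists_fl2 hc).or with ⟨m, hm, h⟩ | ⟨m, hm, h⟩
  exacts [⟨m, hm, .inl h⟩, ⟨m, hm, .inr h⟩]

lemma fl_eq_fl2_iff {n m : ℕ} : fl n = fl2 m ↔ n = 0 ∧ m = 0 := by
  refine ⟨fun h => ?_, fun ⟨hn, hm⟩ => by simp [hn, hm, fl2_eq_fl_add, fl_zero]⟩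
  have := le_fl n
  rw [fl2_eq_fl_add] at h
  obtain rfl | hm := Nat.eq_zero_or_pos m
  · simp only [fl_zero, add_zero] at h
    omega
  obtain rfl | hn := Nat.eq_zero_or_pos n
  · simp only [fl_zero] at h
    omega
  rcases xor_exists_fl_exists_fl2 (c := fl n) (by omega) with ⟨-, h'⟩ | ⟨-, h'⟩
  exacts [(h' ⟨m, hm, by rw [fl2_eq_fl_add, h]⟩).elim, (h' ⟨n, hn, rfl⟩).elim]

lemma grundy_eq_sInf (p : ℕ × ℕ) : grundy p = sInf {g | ∀ q, FMove p q → grundy q ≠ g} := by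
  rw [grundy]

lemma grundy_le_of_forall_ne {p : ℕ × ℕ} {g : ℕ} (h : ∀ q, FMove p q → grundy q ≠ g) :
    grundy p ≤ g := by
  rw [grundy_eq_sInf]
  exact Nat.sInf_le h

lemma grundy_le_add (p : ℕ × ℕ) : grundy p ≤ p.1 + p.2 := by
  induction h : p.1 + p.2 using Nat.strong_induction_on generalizing p with
  | _ N ih =>
    subst h
    exact grundy_le_of_forall_ne fun q hq => by
      have := fMove_lt hq
      have := ih _ this q rfl
      omega

lemma grundy_ne_of_fMove {p q : ℕ × ℕ} (h : FMove p q) : grundy q ≠ grundy p := by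
  have hne : {g | ∀ q, FMove p q → grundy q ≠ g}.Nonempty :=
    ⟨p.1 + p.2, fun q hq => ((grundy_le_add q).trans_lt (fMove_lt hq)).ne⟩
  have := Nat.sInf_mem hne q h
  rwa [← grundy_eq_sInf] at this

theorem grundy_eq_iff_of_levels {S : ℕ → Set (ℕ × ℕ)} {k : ℕ}
    (hdisj : ∀ i ≤ k, ∀ j < i, Disjoint (S j) (S i))
    (hstable : ∀ i ≤ k, ∀ p ∈ S i, ∀ q ∈ S i, ¬ FMove p q)
    (habsorb : ∀ i ≤ k, ∀ p, (∀ j ≤ i, p ∉ S j) → ∃ q ∈ S i, FMove p q)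
    (p : ℕ × ℕ) {i : ℕ} (hi : i ≤ k) : grundy p = i ↔ p ∈ S i := by
  induction h : p.1 + p.2 using Nat.strong_induction_on generalizing p i with
  | _ N ih =>
    subst h
    have ih' {q : ℕ × ℕ} (hq : FMove p q) {j : ℕ} (hj : j ≤ k) : grundy q = j ↔ q ∈ S j :=
      ih _ (fMove_lt hq) q hj rfl
    have of_mem {i : ℕ} (hi : i ≤ k) (hp : p ∈ S i) : grundy p = i := by
      refine le_antisymm (grundy_le_of_forall_ne fun q hq hqi =>
        hstable i hi p hp q ((ih' hq hi).mp hqi) hq) (not_lt.mp fun hlt => ?_)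
      obtain ⟨q, hqS, hq⟩ := habsorb (grundy p) (by omega) p fun j hj hpj =>
        (hdisj i hi j (by omega)).notMem_of_mem_right hp hpj
      exact grundy_ne_of_fMove hq ((ih' hq (by omega)).mpr hqS)
    refine ⟨fun hg => ?_, of_mem hi⟩
    by_contra hp
    by_cases hlow : ∃ j < i, p ∈ S j
    · obtain ⟨j, hj, hpj⟩ := hlow
      exact hj.ne ((of_mem (by omega) hpj).symm.trans hg)
    · obtain ⟨q, hqS, hq⟩ := habsorb i hi p fun j hj hpj =>
        (Nat.lt_or_eq_of_le hj).elim (fun hji => hlow ⟨j, hji, hpj⟩) fun hji => hp (hji ▸ hpj)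
      exact grundy_ne_of_fMove hq (((ih' hq hi).mpr hqS).trans hg.symm)

/-- The moves of F-Wythoff between sorted positions `a ≤ b` and `x ≤ y`. -/
def SortedMove (a b x y : ℕ) : Prop :=
  (x = a ∧ y < b) ∨ (x < a ∧ y = b) ∨ (x < a ∧ y = a) ∨
    (0 < x ∧ x < a ∧ y + a = b + x ∧ y / x = b / a)

def unordered (P : ℕ → ℕ → Prop) : Set (ℕ × ℕ) := {p | P (min p.1 p.2) (max p.1 p.2)}

lemma eq_min_max_or_eq_max_min (p : ℕ × ℕ) :
    p = (min p.1 p.2, max p.1 p.2) ∨ p = (max p.1 p.2, min p.1 p.2) := by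
  rcases le_total p.1 p.2 with h | h
  · simp [h]
  · simp [h]

lemma fMove_iff_sortedMove {p q : ℕ × ℕ} :
    FMove p q ↔ SortedMove (min p.1 p.2) (max p.1 p.2) (min q.1 q.2) (max q.1 q.2) := by
  constructor
  · rintro ⟨a, b, x, y, hab, hxy, hp, hq, h⟩
    have hp' : min p.1 p.2 = a ∧ max p.1 p.2 = b := by rcases hp with rfl | rfl <;> simp [hab]
    have hq' : min q.1 q.2 = x ∧ max q.1 q.2 = y := by rcases hq with rfl | rfl <;> simp [hxy]
    rw [hp'.1, hp'.2, hq'.1, hq'.2]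
    rcases h with h | h | h | ⟨k, hk1, hka, hdiv, rfl, rfl⟩
    · exact .inl h
    · exact .inr (.inl h)
    · exact .inr (.inr (.inl h))
    · exact .inr (.inr (.inr ⟨by omega, by omega, by omega, hdiv⟩))
  · intro h
    refine ⟨_, _, _, _, min_le_max, min_le_max, eq_min_max_or_eq_max_min p,
      eq_min_max_or_eq_max_min q, ?_⟩
    rcases h with h | h | h | ⟨hx, hxa, hdiff, hdiv⟩
    · exact .inl h
    · exact .inr (.inl h)
    · exact .inr (.inr (.inl h))
    · have hab := min_le_max (a := p.1) (b := p.2)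
      refine .inr (.inr (.inr
        ⟨min p.1 p.2 - min q.1 q.2, by omega, by omega, ?_, by omega, by omega⟩))
      rwa [show max p.1 p.2 - (min p.1 p.2 - min q.1 q.2) = max q.1 q.2 by omega,
        show min p.1 p.2 - (min p.1 p.2 - min q.1 q.2) = min q.1 q.2 by omega]

theorem grundy_eq_iff_of_sorted_levels {P : ℕ → ℕ → ℕ → Prop} {k : ℕ}
    (hdisj : ∀ i ≤ k, ∀ j < i, ∀ a b, P j a b → ¬ P i a b)
    (hstable : ∀ i ≤ k, ∀ a b x y, P i a b → P i x y → ¬ SortedMove a b x y)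
    (habsorb : ∀ i ≤ k, ∀ a b, a ≤ b → (∀ j ≤ i, ¬ P j a b) →
      ∃ x y, x ≤ y ∧ P i x y ∧ SortedMove a b x y)
    (p : ℕ × ℕ) {i : ℕ} (hi : i ≤ k) : grundy p = i ↔ p ∈ unordered (P i) := by
  refine grundy_eq_iff_of_levels (S := fun i => unordered (P i))
    (fun i hi j hj => Set.disjoint_left.mpr fun p => hdisj i hi j hj _ _)
    (fun i hi p hp q hq hpq => hstable i hi _ _ _ _ hp hq (fMove_iff_sortedMove.mp hpq))
    (fun i hi p hp => ?_) p hi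
  obtain ⟨x, y, hxy, hPxy, hmove⟩ := habsorb i hi _ _ min_le_max hp
  refine ⟨(x, y), by simpa [unordered, hxy] using hPxy, fMove_iff_sortedMove.mpr ?_⟩
  simpa [hxy] using hmove

lemma sortedMove_min {a b x : ℕ} (hx : x < a) : SortedMove a b x b := .inr (.inl ⟨hx, rfl⟩)

lemma sortedMove_max {a b y : ℕ} (hy : y < b) : SortedMove a b a y := .inl ⟨rfl, hy⟩

lemma sortedMove_max_below {a b x : ℕ} (hx : x < a) : SortedMove a b x a :=
  .inr (.inr (.inl ⟨hx, rfl⟩))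

lemma sortedMove_diag {a b x y : ℕ} (hx : 0 < x) (hxa : x < a) (hdiff : y + a = b + x)
    (hyx : x ≤ y) (hy : y < 2 * x) (hb : b < 2 * a) : SortedMove a b x y := by
  refine .inr (.inr (.inr ⟨hx, hxa, hdiff, ?_⟩))
  rw [Nat.div_eq_of_lt_le (k := 1) (by omega) (by omega),
    Nat.div_eq_of_lt_le (k := 1) (by omega) (by omega)]

/-- Wythoff's P-position `(⌊nφ⌋, ⌊nφ²⌋)` translated by `(c, c)`. -/
def ShiftedWythoff (c a b : ℕ) : Prop := ∃ n, a = fl n + c ∧ b = fl2 n + c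

lemma shiftedWythoff_iff {c a b : ℕ} : ShiftedWythoff c a b ↔ a ≤ b ∧ a = fl (b - a) + c := by
  constructor
  · rintro ⟨n, rfl, rfl⟩
    rw [fl2_eq_fl_add]
    exact ⟨by omega, by rw [show fl n + n + c - (fl n + c) = n by omega]⟩
  · rintro ⟨hab, ha⟩
    exact ⟨b - a, ha, by rw [fl2_eq_fl_add]; omega⟩

lemma ShiftedWythoff.not_sortedMove {c a b x y : ℕ} (hab : ShiftedWythoff c a b)
    (hxy : ShiftedWythoff c x y) : ¬ SortedMove a b x y := by
  rw [shiftedWythoff_iff] at hab hxy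
  rintro (⟨rfl, hy⟩ | ⟨hx, rfl⟩ | ⟨hx, rfl⟩ | ⟨-, hx, hdiff, -⟩)
  · have := fl_strictMono.injective (by omega : fl (y - x) = fl (b - x))
    omega
  · have := fl_strictMono (by omega : y - a < y - x)
    omega
  · have := fl_eq_fl2_iff.mp (by rw [fl2_eq_fl_add]; omega : fl (b - y) = fl2 (y - x))
    omega
  · rw [show y - x = b - a by omega] at hxy
    omega

lemma ShiftedWythoff.exists_sortedMove {c a b : ℕ} (hc : 0 < c) (hab : a ≤ b) (hca : c < a)
    (h : ¬ ShiftedWythoff c a b) : ∃ x y, x ≤ y ∧ ShiftedWythoff c x y ∧ SortedMove a b x y := by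
  obtain ⟨m, hm, hfl | hfl2⟩ := exists_eq_fl_or_eq_fl2 (c := a - c) (by omega)
  · obtain rfl : a = fl m + c := by omega
    have := fl2_eq_fl_add m
    rcases lt_trichotomy (b - (fl m + c)) m with hlt | heq | hgt
    · have := fl_strictMono hlt
      have := fl2_eq_fl_add (b - (fl m + c))
      have := le_fl (b - (fl m + c))
      exact ⟨_, _, by omega, ⟨b - (fl m + c), rfl, rfl⟩,
        sortedMove_diag (by omega) (by omega) (by omega) (by omega) (by omega) (by omega)⟩
    · exact absurd ⟨m, rfl, by omega⟩ h
    · exact ⟨_, _, by omega, ⟨m, rfl, rfl⟩, sortedMove_max (by omega)⟩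
  · obtain rfl : a = fl2 m + c := by omega
    have := fl2_eq_fl_add m
    exact ⟨_, _, by omega, ⟨m, rfl, rfl⟩, sortedMove_max_below (by omega)⟩

lemma shiftedWythoff_self (c : ℕ) : ShiftedWythoff c c c :=
  ⟨0, by simp [fl_zero], by simp [fl2_eq_fl_add, fl_zero]⟩

lemma ShiftedWythoff.div_eq_one {c a b : ℕ} (hc : 0 < c) (h : ShiftedWythoff c a b) :
    b / a = 1 := by
  obtain ⟨n, rfl, rfl⟩ := h
  have := le_fl n
  rw [fl2_eq_fl_add]
  exact Nat.div_eq_of_lt_le (by omega) (by omega)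

/-- The sorted positions of Grundy value `i`, for `i ≤ 2`. -/
def InLevel : ℕ → ℕ → ℕ → Prop
  | 0, a, b => a = 0 ∧ b = 0 ∨ ShiftedWythoff 1 a b
  | 1, a, b => a = 0 ∧ b = 1 ∨ ShiftedWythoff 2 a b
  | 2, a, b => a = 0 ∧ b = 2 ∨ a = 1 ∧ b = 3 ∨ ShiftedWythoff 4 a b
  | _, _, _ => False

lemma not_inLevel_of_lt {i j a b : ℕ} (hji : j < i) (hj : InLevel j a b) : ¬ InLevel i a b := by
  have := le_fl (b - a)
  match i, j, hji with
  | 1, 0, _ | 2, 0, _ | 2, 1, _ =>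
    simp only [InLevel, shiftedWythoff_iff] at hj ⊢
    omega
  | i + 3, _, _ => exact id

lemma InLevel.not_sortedMove {i a b x y : ℕ} (hab : InLevel i a b) (hxy : InLevel i x y) :
    ¬ SortedMove a b x y := by
  match i with
  | 0 =>
    rcases hab with ⟨rfl, rfl⟩ | hab <;> rcases hxy with ⟨rfl, rfl⟩ | hxy
    all_goals first
      | exact hab.not_sortedMove hxy
      | (simp only [SortedMove, shiftedWythoff_iff] at *; omega)
  | 1 =>
    rcases hab with ⟨rfl, rfl⟩ | hab <;> rcases hxy with ⟨rfl, rfl⟩ | hxy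
    all_goals first
      | exact hab.not_sortedMove hxy
      | (simp only [SortedMove, shiftedWythoff_iff] at *; omega)
  | 2 =>
    rcases hab with ⟨rfl, rfl⟩ | ⟨rfl, rfl⟩ | hab <;>
      rcases hxy with ⟨rfl, rfl⟩ | ⟨rfl, rfl⟩ | hxy
    case inr.inr.inr.inl =>
      -- the diagonal move from `(a, a + 2)` to `(1, 3)`, excluded only by the quotient condition
      have := hab.div_eq_one four_pos
      simp only [SortedMove, shiftedWythoff_iff] at *
      omega
    all_goals first
      | exact hab.not_sortedMove hxy
      | (simp only [SortedMove, shiftedWythoff_iff] at *; omega)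
  | _ + 3 => exact hab.elim

lemma InLevel.exists_sortedMove {i a b : ℕ} (hi : i ≤ 2) (hab : a ≤ b)
    (hout : ∀ j ≤ i, ¬ InLevel j a b) : ∃ x y, x ≤ y ∧ InLevel i x y ∧ SortedMove a b x y := by
  have h0 := hout 0 (Nat.zero_le i)
  simp only [InLevel] at h0
  have h11 : ShiftedWythoff 1 1 1 := shiftedWythoff_self 1
  match i, hi with
  | 0, _ =>
    rcases lt_or_ge 1 a with ha | ha
    · obtain ⟨x, y, hxy, hw, hmove⟩ :=
        ShiftedWythoff.exists_sortedMove one_pos hab ha (h0 <| .inr ·)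
      exact ⟨x, y, hxy, .inr hw, hmove⟩
    interval_cases a
    · exact ⟨0, 0, le_rfl, .inl ⟨rfl, rfl⟩, sortedMove_max (by grind)⟩
    · exact ⟨1, 1, le_rfl, .inr h11, sortedMove_max (by grind)⟩
  | 1, _ =>
    have h1 := hout 1 le_rfl
    simp only [InLevel] at h1
    rcases lt_or_ge 2 a with ha | ha
    · obtain ⟨x, y, hxy, hw, hmove⟩ :=
        ShiftedWythoff.exists_sortedMove two_pos hab ha (h1 <| .inr ·)
      exact ⟨x, y, hxy, .inr hw, hmove⟩
    interval_cases a
    · exact ⟨0, 1, zero_le_one, .inl ⟨rfl, rfl⟩, sortedMove_max (by grind)⟩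
    · exact ⟨0, 1, zero_le_one, .inl ⟨rfl, rfl⟩, sortedMove_max_below one_pos⟩
    · have h23 : ShiftedWythoff 1 2 3 := ⟨1, by simp [fl_one], by simp [fl2_eq_fl_add, fl_one]⟩
      have h22 : ShiftedWythoff 2 2 2 := shiftedWythoff_self 2
      have hb : 3 < b := by
        by_contra
        interval_cases b <;> tauto
      exact ⟨2, 2, le_rfl, .inr h22, sortedMove_max (by omega)⟩
  | 2, _ =>
    have h1 := hout 1 one_le_two
    have h2 := hout 2 le_rfl
    simp only [InLevel] at h1 h2
    rcases lt_or_ge 4 a with ha | ha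
    · obtain ⟨x, y, hxy, hw, hmove⟩ :=
        ShiftedWythoff.exists_sortedMove four_pos hab ha (h2 <| .inr <| .inr ·)
      exact ⟨x, y, hxy, .inr (.inr hw), hmove⟩
    interval_cases a
    · exact ⟨0, 2, zero_le_two, .inl ⟨rfl, rfl⟩, sortedMove_max (by grind)⟩
    · rcases (show b = 2 ∨ 3 < b by grind) with rfl | hb
      · exact ⟨0, 2, zero_le_two, .inl ⟨rfl, rfl⟩, sortedMove_min one_pos⟩
      · exact ⟨1, 3, by norm_num, .inr (.inl ⟨rfl, rfl⟩), sortedMove_max hb⟩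
    · exact ⟨0, 2, zero_le_two, .inl ⟨rfl, rfl⟩, sortedMove_max_below two_pos⟩
    · exact ⟨1, 3, by norm_num, .inr (.inl ⟨rfl, rfl⟩), sortedMove_max_below (by norm_num)⟩
    · have h44 : ShiftedWythoff 4 4 4 := shiftedWythoff_self 4
      exact ⟨4, 4, le_rfl, .inr (.inr h44), sortedMove_max (by grind)⟩

lemma mem_unordered_inLevel_two_iff (p : ℕ × ℕ) : p ∈ unordered (InLevel 2) ↔
    p = (0, 2) ∨ p = (2, 0) ∨ p = (1, 3) ∨ p = (3, 1) ∨
      ∃ n : ℕ, p = (fl n + 4, fl2 n + 4) ∨ p = (fl2 n + 4, fl n + 4) := by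
  obtain ⟨a, b⟩ := p
  change InLevel 2 (min a b) (max a b) ↔ _
  simp only [InLevel, ShiftedWythoff, Prod.mk.injEq]
  have (n : ℕ) := fl2_eq_fl_add n
  rcases le_total a b with h | h
  · simp only [min_eq_left h, max_eq_right h]
    grind
  · simp only [min_eq_right h, max_eq_left h]
    grind

theorem stmt15 (p : ℕ × ℕ) :
    grundy p = 2 ↔ p ∈ {p : ℕ × ℕ | p = (0, 2) ∨ p = (2, 0) ∨ p = (1, 3) ∨ p = (3, 1) ∨ ∃ n : ℕ, p = (fl n + 4, fl2 n + 4) ∨ p = (fl2 n + 4, fl n + 4)} := by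
  rw [Set.mem_ofPred_eq, ← mem_unordered_inLevel_two_iff]
  exact grundy_eq_iff_of_sorted_levels (P := InLevel) (k := 2)
    (fun _ _ _ hji _ _ => not_inLevel_of_lt hji) (fun _ _ _ _ _ _ => InLevel.not_sortedMove)
    (fun _ hi _ _ => InLevel.exists_sortedMove hi) p le_rfl
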